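/- arXiv:1906.03583 — 5 statements merged into one kernel-verified Lean document; each statement's English description precedes it below -/
import Mathlib

section
/- Let A be a commutative ring, let (h_n)_{n≥1} be a sequence of elements of A, and let (S_n)_{n≥1} be a sequence of subsets of A with h_n ∈ S_n for all n, satisfying: (1) S_{n+1} ⊆ S_n for all n ≥ 1; (2) each S_n is closed under multiplication; (3) for every g ∈ S_{n+1} and f ∈ A, g + f·h_n ∈ S_{n+1}. Suppose further that there exists a prime ideal p_1 of A with p_1 ∩ S_1 = ∅. Then for every n ≥ 1 there exists a strictly increasing chain of prime ideals p_1 ⊂ p_2 ⊂ ⋯ ⊂ p_n of A with p_n ∩ S_n = ∅. In particular, A has infinite Krull dimension. -/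
/-!
Starting from an ideal `p` disjoint from `S n`, the ideal `p + (h n)` stays disjoint from `S (n+1)`:
if `a + f h n ∈ S (n+1)` with `a ∈ p`, then `a ∈ S (n+1) ⊆ S n` by (3). Enlarging it to a prime
disjoint from the multiplicatively closed set `S (n+1)` gives a prime strictly above `p`, since it
contains `h n ∉ p`. Iterating yields an infinite strictly increasing chain of primes.
-/

open Ideal

theorem Ideal.exists_le_prime_disjoint_of_mul_mem {A : Type*} [CommRing A] {I : Ideal A}
    {S : Set A} (hS : ∀ a ∈ S, ∀ b ∈ S, a * b ∈ S) (hI : I ≠ ⊤) (hd : Disjoint (I : Set A) S) :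
    ∃ q : Ideal A, q.IsPrime ∧ I ≤ q ∧ Disjoint (q : Set A) S := by
  let M : Submonoid A :=
    { carrier := insert 1 S
      one_mem' := Set.mem_insert 1 S
      mul_mem' := by
        rintro a b (rfl | ha) (rfl | hb)
        exacts [Or.inl (one_mul 1), by simpa using Or.inr hb, by simpa using Or.inr ha,
          Or.inr (hS a ha b hb)] }
  have hIM : Disjoint (I : Set A) M :=
    Set.disjoint_insert_right.2 ⟨(ne_top_iff_one I).1 hI, hd⟩
  obtain ⟨q, hq, hIq, hqM⟩ := I.exists_le_prime_disjoint M hIM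
  exact ⟨q, hq, hIq, hqM.mono_right (Set.subset_insert 1 S)⟩

theorem Ideal.exists_prime_gt_disjoint {A : Type*} [CommRing A] {p : Ideal A} {S T : Set A}
    {x : A} (hx : x ∈ S) (hTS : T ⊆ S) (hT : ∀ a ∈ T, ∀ b ∈ T, a * b ∈ T)
    (hTx : ∀ g ∈ T, ∀ f : A, g + f * x ∈ T) (hTne : T.Nonempty) (hp : Disjoint (p : Set A) S) :
    ∃ q : Ideal A, q.IsPrime ∧ p < q ∧ Disjoint (q : Set A) T := by
  have hI : Disjoint ((p ⊔ span {x} : Ideal A) : Set A) T := by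
    refine Set.disjoint_left.2 fun y hy hyT => ?_
    obtain ⟨a, ha, b, hb, rfl⟩ := Submodule.mem_sup.1 hy
    obtain ⟨f, rfl⟩ := mem_span_singleton'.1 hb
    have haT : a ∈ T := by simpa using hTx _ hyT (-f)
    exact Set.disjoint_left.1 hp ha (hTS haT)
  obtain ⟨t, ht⟩ := hTne
  have hne : p ⊔ span {x} ≠ ⊤ := fun htop =>
    Set.disjoint_left.1 hI (htop ▸ Submodule.mem_top : t ∈ p ⊔ span {x}) ht
  obtain ⟨q, hq, hle, hqT⟩ := exists_le_prime_disjoint_of_mul_mem hT hne hI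
  refine ⟨q, hq, lt_of_le_of_ne (le_sup_left.trans hle) ?_, hqT⟩
  rintro rfl
  exact Set.disjoint_left.1 hp (hle (mem_sup_right (mem_span_singleton_self x))) hx

theorem exists_strictMono_nat_of_forall_exists_gt {α : Type*} [Preorder α]
    (Q : ℕ → α → Prop) {a : α} (ha : Q 0 a) (hstep : ∀ k x, Q k x → ∃ y, x < y ∧ Q (k + 1) y) :
    ∃ f : ℕ → α, StrictMono f ∧ f 0 = a ∧ ∀ k, Q k (f k) := by
  choose g hg using hstep
  let c : ∀ k, {x // Q k x} := fun k =>
    Nat.rec ⟨a, ha⟩ (fun k x => ⟨g k x.1 x.2, (hg k x.1 x.2).2⟩) k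
  exact ⟨fun k => (c k).1, strictMono_nat_of_lt_succ fun k => (hg k _ (c k).2).1, rfl,
    fun k => (c k).2⟩

theorem ringKrullDim_eq_top_of_strictMono {A : Type*} [CommRing A] {P : ℕ → Ideal A}
    (hP : ∀ k, (P k).IsPrime) (hmono : StrictMono P) : ringKrullDim A = ⊤ :=
  top_le_iff.1 <| Order.krullDim_nat ▸
    Order.krullDim_le_of_strictMono (fun k => (⟨P k, hP k⟩ : PrimeSpectrum A))
      fun _ _ hab => hmono hab

/-- Arnold-style criterion: given elements `h n` and sets `S n` (indexed for `n ≥ 1`)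
with `h n ∈ S n`, satisfying (1) `S (n+1) ⊆ S n`, (2) each `S n` multiplicatively closed,
(3) `g ∈ S (n+1)` and `f : A` imply `g + f * h n ∈ S (n+1)`, together with a prime `p₁`
disjoint from `S 1`, there are arbitrarily long strictly increasing chains of primes
starting at `p₁` whose top is disjoint from the corresponding `S n`; in particular the
Krull dimension of `A` is infinite. -/
theorem stmt0 (A : Type*) [CommRing A] (h : ℕ → A) (S : ℕ → Set A)
    (hmem : ∀ n, 1 ≤ n → h n ∈ S n)
    (hyp1 : ∀ n, 1 ≤ n → S (n + 1) ⊆ S n)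
    (hyp2 : ∀ n, 1 ≤ n → ∀ a ∈ S n, ∀ b ∈ S n, a * b ∈ S n)
    (hyp3 : ∀ n, 1 ≤ n → ∀ g ∈ S (n + 1), ∀ f : A, g + f * h n ∈ S (n + 1))
    (p₁ : Ideal A) (hp₁ : p₁.IsPrime) (hdisj : (p₁ : Set A) ∩ S 1 = ∅) :
    (∀ n : ℕ, ∀ hn : 1 ≤ n, ∃ P : Fin n → Ideal A,
      (∀ i, (P i).IsPrime) ∧ StrictMono P ∧ P ⟨0, by omega⟩ = p₁ ∧
      ((P ⟨n - 1, by omega⟩ : Set A) ∩ S n = ∅)) ∧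
    ringKrullDim A = ⊤ := by
  obtain ⟨P, hPmono, hP0, hP⟩ := exists_strictMono_nat_of_forall_exists_gt
    (fun k (q : Ideal A) => q.IsPrime ∧ Disjoint (q : Set A) (S (k + 1)))
    ⟨hp₁, Set.disjoint_iff_inter_eq_empty.2 hdisj⟩ fun k q hq =>
      (exists_prime_gt_disjoint (hmem (k + 1) k.succ_pos) (hyp1 (k + 1) k.succ_pos)
        (hyp2 (k + 2) (by omega)) (hyp3 (k + 1) k.succ_pos) ⟨_, hmem (k + 2) (by omega)⟩
        hq.2).imp fun _ ⟨hr, hqr, hrS⟩ => ⟨hqr, hr, hrS⟩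
  refine ⟨fun n hn => ⟨fun i => P i, fun i => (hP i).1, hPmono.comp Fin.val_strictMono, hP0, ?_⟩,
    ringKrullDim_eq_top_of_strictMono (fun k => (hP k).1) hPmono⟩
  have hlast := (hP (n - 1)).2
  rw [Nat.sub_add_cancel hn] at hlast
  exact Set.disjoint_iff_inter_eq_empty.1 hlast
end

section
/- Let R be a perfect valuation ring of characteristic p, complete with respect to a nondiscrete rank-1 valuation v, with pseudouniformizer ϖ of valuation 1. In A = W(R), the ideal p := ⋃_{k≥0} [ϖ^{1/p^k}]·A (the union over k of the principal ideals generated by the Teichmüller lifts of the p^k-th roots of ϖ) is a prime ideal. -/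
/-!
Write `|x|ₙ := v(xₙ)^{p⁻ⁿ}` for the absolute value of the `n`-th Teichmüller digit of `x ∈ W(R)`.
Membership `x ∈ ([ϖ^{1/pᵏ}])` means `ϖ^{p^{n-k}} ∣ xₙ` for all `n`; it forces
`|x|ₙ ≤ v(ϖ)^{1/pᵏ}` and follows from `|x|ₙ < v(ϖ)^{1/pᵏ}`, so `x ∈ 𝔭` iff the `|x|ₙ` stay away
from `1`. For `0 < ρ < 1` the Gauss norm `maxₙ |x|ₙ ρⁿ` is supermultiplicative: if `i`, `j` are
the least indices where it is attained for `f`, `g`, then in the `(i + j)`-th coefficient of `f g`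
the term `f_i^{p^j} g_j^{p^i}` strictly dominates everything else. Letting `ρ → 1` gives
`|f|ᵢ |g|ⱼ ≤ supₙ |fg|ₙ` for all `i, j`, hence `f g ∉ 𝔭` when `f, g ∉ 𝔭`.
-/

open Filter Finset Topology
open scoped NNReal

theorem NNReal.le_of_forall_mul_pow_le {x y : ℝ≥0} (m : ℕ)
    (h : ∀ ρ : ℝ≥0, 0 < ρ → ρ < 1 → x * ρ ^ m ≤ y) : x ≤ y := by
  have := nhdsLT_neBot_of_exists_lt (⟨0, one_pos⟩ : ∃ a : ℝ≥0, a < 1)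
  have hlim : Tendsto (fun ρ : ℝ≥0 => x * ρ ^ m) (𝓝[<] 1) (𝓝 x) :=
    ((by fun_prop : Continuous fun ρ : ℝ≥0 => x * ρ ^ m).tendsto' 1 x (by simp)).mono_left
      nhdsWithin_le_nhds
  refine le_of_tendsto hlim ?_
  filter_upwards [self_mem_nhdsWithin, nhdsWithin_le_nhds (lt_mem_nhds one_pos)] with ρ hρ1 hρ0
  exact h ρ hρ0 hρ1

theorem NNReal.exists_forall_mul_pow_le {φ : ℕ → ℝ≥0} (hφ : ∀ a, φ a ≤ 1) {ρ : ℝ≥0}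
    (hρ : ρ < 1) : ∃ i, ∀ a, φ a * ρ ^ a ≤ φ i * ρ ^ i := by
  by_cases h : ∃ c, 0 < φ c * ρ ^ c
  · obtain ⟨c, hc⟩ := h
    refine continuous_of_discreteTopology.exists_forall_ge' c ?_
    rw [cocompact_eq_cofinite, Nat.cofinite_eq_atTop]
    filter_upwards [(tendsto_pow_atTop_nhds_zero_of_lt_one hρ).eventually
      (gt_mem_nhds hc)] with a ha
    exact (mul_le_of_le_one_left' (hφ a)).trans ha.le
  · push Not at h
    exact ⟨0, fun a => (h a).trans zero_le⟩

theorem NNReal.exists_least_forall_mul_pow_le {φ : ℕ → ℝ≥0} (hφ : ∀ a, φ a ≤ 1) {ρ : ℝ≥0}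
    (hρ : ρ < 1) : ∃ i, (∀ a, φ a * ρ ^ a ≤ φ i * ρ ^ i) ∧
      ∀ a < i, φ a * ρ ^ a < φ i * ρ ^ i := by
  classical
  have hex := NNReal.exists_forall_mul_pow_le hφ hρ
  refine ⟨Nat.find hex, Nat.find_spec hex, fun a ha => ?_⟩
  obtain ⟨b, hb⟩ := not_forall.1 (Nat.find_min hex ha)
  exact (not_le.1 hb).trans_le (Nat.find_spec hex b)

theorem NNReal.mul_lt_mul_of_forall_mul_pow_le {φ ψ : ℕ → ℝ≥0} {ρ : ℝ≥0} (hρ0 : 0 < ρ)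
    (hρ1 : ρ < 1) {i j : ℕ} (hi : ∀ a, φ a * ρ ^ a ≤ φ i * ρ ^ i)
    (hi' : ∀ a < i, φ a * ρ ^ a < φ i * ρ ^ i) (hj : ∀ b, ψ b * ρ ^ b ≤ ψ j * ρ ^ j)
    (hj' : ∀ b < j, ψ b * ρ ^ b < ψ j * ρ ^ j) (hpos : 0 < φ i * ψ j) {a b : ℕ}
    (hab : a + b ≤ i + j) (hne : (a, b) ≠ (i, j)) : φ a * ψ b < φ i * ψ j := by
  have hsplit : ∀ c d, φ c * ψ d * ρ ^ (c + d) = (φ c * ρ ^ c) * (ψ d * ρ ^ d) :=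
    fun c d => by ring
  obtain ⟨hφi, hψj⟩ := CanonicallyOrderedAdd.mul_pos.1 hpos
  rcases hab.lt_or_eq with hlt | heq
  · have hle : φ a * ψ b * ρ ^ (a + b) ≤ φ i * ψ j * ρ ^ (i + j) := by
      rw [hsplit, hsplit]
      exact mul_le_mul' (hi a) (hj b)
    refine lt_of_mul_lt_mul_right (hle.trans_lt ?_) zero_le
    exact mul_lt_mul_of_pos_left (pow_lt_pow_right_of_lt_one₀ hρ0 hρ1 hlt) hpos
  · have hai : a ≠ i := fun h => hne (by rw [h, show b = j by omega])
    have key : (φ a * ρ ^ a) * (ψ b * ρ ^ b) < (φ i * ρ ^ i) * (ψ j * ρ ^ j) := by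
      rcases hai.lt_or_gt with h | h
      · calc (φ a * ρ ^ a) * (ψ b * ρ ^ b) ≤ (φ a * ρ ^ a) * (ψ j * ρ ^ j) :=
              mul_le_mul_right (hj b) _
          _ < (φ i * ρ ^ i) * (ψ j * ρ ^ j) :=
              mul_lt_mul_of_pos_right (hi' a h) (mul_pos hψj (pow_pos hρ0 j))
      · calc (φ a * ρ ^ a) * (ψ b * ρ ^ b) ≤ (φ i * ρ ^ i) * (ψ b * ρ ^ b) :=
              mul_le_mul_left (hi a) _
          _ < (φ i * ρ ^ i) * (ψ j * ρ ^ j) :=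
              mul_lt_mul_of_pos_left (hj' b (by omega)) (mul_pos hφi (pow_pos hρ0 i))
    rw [← hsplit, ← hsplit, heq] at key
    exact lt_of_mul_lt_mul_right key zero_le

namespace Valuation

section LinearOrdered

variable {R Γ : Type*} [CommRing R] [LinearOrderedCommMonoidWithZero Γ] (v : Valuation R Γ)

theorem map_le_of_dvd (hv : ∀ x, v x ≤ 1) {x y : R} (h : y ∣ x) : v x ≤ v y := by
  obtain ⟨c, rfl⟩ := h
  simpa only [map_mul] using mul_le_of_le_one_right' (hv c)

theorem dvd_of_map_lt [PreValuationRing R] (hv : ∀ x, v x ≤ 1) {x y : R} (h : v x < v y) :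
    y ∣ x :=
  (ValuationRing.dvd_total y x).resolve_right fun hxy => (v.map_le_of_dvd hv hxy).not_gt h

end LinearOrdered

variable {R : Type*} [CommRing R] (v : Valuation R ℝ≥0)

theorem exists_lt_map_lt (hv1 : ∀ t < 1, ∃ x, t < v x ∧ v x < 1) {β μ : ℝ≥0} (hβμ : β < μ)
    (hμ : μ ≤ 1) : ∃ x, β < v x ∧ v x < μ := by
  have hμ0 : 0 < μ := pos_of_gt hβμ
  obtain ⟨x, hx, hx1⟩ := hv1 (β / μ) ((div_lt_one hμ0).2 hβμ)
  have hex : ∃ m, v x ^ m < μ := NNReal.exists_pow_lt_of_lt_one hμ0 hx1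
  obtain ⟨k, hk⟩ : ∃ k, Nat.find hex = k + 1 :=
    Nat.exists_eq_succ_of_ne_zero fun h => (Nat.find_spec hex).not_ge (by simpa [h] using hμ)
  have hμk : μ ≤ v x ^ k := not_lt.1 (Nat.find_min hex (by omega))
  refine ⟨x ^ (k + 1), ?_, by simpa [hk] using Nat.find_spec hex⟩
  calc β = μ * (β / μ) := (mul_div_cancel₀ β hμ0.ne').symm
    _ < μ * v x := mul_lt_mul_of_pos_left hx hμ0
    _ ≤ v x ^ k * v x := mul_le_mul_left hμk _
    _ = v (x ^ (k + 1)) := by rw [map_pow, pow_succ]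

variable {p : ℕ} {π : ℕ → R}

theorem map_pow_pow_eq_of_forall_pow_eq (hπ : ∀ k, π (k + 1) ^ p = π k) (k : ℕ) :
    v (π k) ^ p ^ k = v (π 0) := by
  induction k with
  | zero => simp
  | succ k ih => rw [pow_succ', pow_mul, ← map_pow, hπ, ih]

theorem exists_lt_map_of_forall_pow_eq (hp : 1 < p) (hπ : ∀ k, π (k + 1) ^ p = π k)
    (h0 : 0 < v (π 0)) {t : ℝ≥0} (ht : t < 1) : ∃ k, t < v (π k) := by
  obtain ⟨m, hm⟩ := NNReal.exists_pow_lt_of_lt_one h0 ht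
  refine ⟨m, lt_of_pow_lt_pow_left₀ (p ^ m) zero_le ?_⟩
  rw [map_pow_pow_eq_of_forall_pow_eq v hπ]
  exact (pow_le_pow_right_of_le_one' ht.le (Nat.lt_pow_self hp).le).trans_lt hm

end Valuation

namespace WittVector

variable {p : ℕ} [hp : Fact p.Prime] {R : Type*} [CommRing R]

local notation "𝕎" => WittVector p

theorem coeff_iterate_verschiebung_teichmuller (a : R) (m n : ℕ) :
    (verschiebung^[m] (teichmuller p a)).coeff n = if n = m then a else 0 := by
  rcases lt_trichotomy n m with h | rfl | h
  · rw [if_neg h.ne, iterate_verschiebung_coeff_eq_zero _ h]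
  · simpa using iterate_verschiebung_coeff (teichmuller p a) n 0
  · obtain ⟨k, rfl⟩ := Nat.exists_eq_add_of_lt h
    rw [if_neg h.ne', show m + k + 1 = k + 1 + m by ring, iterate_verschiebung_coeff,
      teichmuller_coeff_pos p a _ k.succ_pos]

theorem coeff_sum_iterate_verschiebung_teichmuller (x : ℕ → R) (s : Finset ℕ) (n : ℕ) :
    (∑ a ∈ s, verschiebung^[a] (teichmuller p (x a))).coeff n = if n ∈ s then x n else 0 := by
  have hsupp : ∀ k a, (verschiebung^[a] (teichmuller p (x a))).coeff k ≠ 0 → a = k :=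
    fun k a h => by_contra fun hne =>
      h (by rw [coeff_iterate_verschiebung_teichmuller, if_neg (Ne.symm hne)])
  rw [sum_coeff_eq_coeff_sum _
    fun k => ⟨fun a b => Subtype.ext ((hsupp k _ a.2.2).trans (hsupp k _ b.2.2).symm)⟩]
  simp only [coeff_iterate_verschiebung_teichmuller, sum_ite_eq]

theorem truncate_sum_iterate_verschiebung_teichmuller_coeff (x : 𝕎 R) (N : ℕ) :
    truncate N (∑ a ∈ range N, verschiebung^[a] (teichmuller p (x.coeff a))) = truncate N x := by
  ext i
  rw [coeff_truncate, coeff_truncate, coeff_sum_iterate_verschiebung_teichmuller,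
    if_pos (mem_range.2 i.2)]

theorem coeff_eq_of_truncate_eq {x y : 𝕎 R} {n : ℕ}
    (h : truncate (n + 1) x = truncate (n + 1) y) : x.coeff n = y.coeff n := by
  simpa only [coeff_truncate, Fin.val_last] using
    congrArg (TruncatedWittVector.coeff (Fin.last n)) h

theorem truncate_iterate_verschiebung_of_le {m n : ℕ} (h : n ≤ m) (x : 𝕎 R) :
    truncate n (verschiebung^[m] x) = 0 :=
  (mem_ker_truncate n _).2 fun _ hi => iterate_verschiebung_coeff_eq_zero x (hi.trans_le h)

theorem coeff_iterate_verschiebung_teichmuller_add (c : R) (x : 𝕎 R) (n : ℕ) :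
    (verschiebung^[n] (teichmuller p c) + x).coeff n = c + x.coeff n := by
  have htail : tail n x = verschiebung^[n] (x.shift n) := by
    rw [eq_iterate_verschiebung (x := tail n x) (n := n) fun i hi => by simp [tail, select, hi]]
    congr 1
    ext k
    simp [tail, select, shift_coeff]
  have hsplit : verschiebung^[n] (teichmuller p c) + x =
      init n x + verschiebung^[n] (teichmuller p c + x.shift n) := by
    rw [iterate_map_add, ← htail]
    nth_rw 1 [← init_add_tail x n]
    ring
  rw [hsplit, coeff_add_of_disjoint]
  · have hV := iterate_verschiebung_coeff (teichmuller p c + x.shift n) n 0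
    rw [zero_add] at hV
    rw [hV, add_coeff_zero, teichmuller_coeff_zero, shift_coeff, add_zero,
      show (init n x).coeff n = 0 by simp [init, select], zero_add]
  · intro k
    rcases lt_or_ge k n with hk | hk
    · exact Or.inr (iterate_verschiebung_coeff_eq_zero _ hk)
    · exact Or.inl (by simp [init, select, not_lt.2 hk])

theorem span_teichmuller_mono {π : ℕ → R} (hπ : ∀ k, π (k + 1) ^ p = π k) :
    Monotone fun k => Ideal.span {teichmuller p (π k)} :=
  monotone_nat_of_le_succ fun k => Ideal.span_singleton_le_span_singleton.2 <| by
    rw [← hπ k, map_pow]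
    exact dvd_pow_self _ hp.out.ne_zero

section CharP

variable [CharP R p]

theorem iterate_frobenius_teichmuller (a : R) (i : ℕ) :
    frobenius^[i] (teichmuller p a) = teichmuller p (a ^ p ^ i) := by
  ext n
  rw [iterate_frobenius_coeff]
  rcases n with _ | n
  · simp only [teichmuller_coeff_zero]
  · simp only [teichmuller_coeff_pos p _ _ n.succ_pos, zero_pow (pow_ne_zero i hp.out.ne_zero)]

theorem iterate_verschiebung_teichmuller_mul (a b : R) (i j : ℕ) :
    verschiebung^[i] (teichmuller p a) * verschiebung^[j] (teichmuller p b) =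
      verschiebung^[i + j] (teichmuller p (a ^ p ^ j * b ^ p ^ i)) := by
  rw [iterate_verschiebung_mul, iterate_frobenius_teichmuller, iterate_frobenius_teichmuller,
    map_mul]

theorem coeff_teichmuller_mul (a : R) (x : 𝕎 R) (n : ℕ) :
    (teichmuller p a * x).coeff n = a ^ p ^ n * x.coeff n := by
  have h : truncate (n + 1) (teichmuller p a * x) = truncate (n + 1)
      (∑ b ∈ range (n + 1), verschiebung^[b] (teichmuller p (a ^ p ^ b * x.coeff b))) := by
    rw [map_mul, ← truncate_sum_iterate_verschiebung_teichmuller_coeff x, ← map_mul, mul_sum]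
    congr 1
    refine sum_congr rfl fun b _ => ?_
    simpa using iterate_verschiebung_teichmuller_mul a (x.coeff b) 0 b
  rw [coeff_eq_of_truncate_eq h, coeff_sum_iterate_verschiebung_teichmuller,
    if_pos (self_mem_range_succ n)]

theorem mem_span_teichmuller_iff (a : R) (x : 𝕎 R) :
    x ∈ Ideal.span {teichmuller p a} ↔ ∀ n, a ^ p ^ n ∣ x.coeff n := by
  rw [Ideal.mem_span_singleton']
  constructor
  · rintro ⟨y, rfl⟩ n
    exact ⟨y.coeff n, by rw [mul_comm, coeff_teichmuller_mul]⟩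
  · intro h
    choose y hy using h
    exact ⟨mk p y, by ext n; rw [mul_comm, coeff_teichmuller_mul, coeff_mk, hy]⟩

theorem iterate_verschiebung_teichmuller_mem_span {a c : R} {m : ℕ} (h : a ^ p ^ m ∣ c) :
    verschiebung^[m] (teichmuller p c) ∈ Ideal.span {teichmuller p a} := by
  rw [mem_span_teichmuller_iff]
  intro n
  rw [coeff_iterate_verschiebung_teichmuller]
  split_ifs with hn
  · exact hn ▸ h
  · exact dvd_zero _

/-- Expanding `f = ∑ Vᵃ [f_a]` and `g = ∑ Vᵇ [g_b]`, one has
`f * g ≡ ∑ V^{a+b} [f_a^{p^b} g_b^{p^a}]` modulo `V^{i+j+1}`. -/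
theorem exists_coeff_mul_eq_add {f g : 𝕎 R} {i j : ℕ} {τ : R}
    (hτ : ∀ a b, a + b ≤ i + j → (a, b) ≠ (i, j) →
      τ ^ p ^ (a + b) ∣ f.coeff a ^ p ^ b * g.coeff b ^ p ^ a) :
    ∃ Q ∈ Ideal.span {teichmuller p τ},
      (f * g).coeff (i + j) = f.coeff i ^ p ^ j * g.coeff j ^ p ^ i + Q.coeff (i + j) := by
  set n := i + j
  set u : ℕ × ℕ → 𝕎 R := fun ab => verschiebung^[ab.1 + ab.2]
    (teichmuller p (f.coeff ab.1 ^ p ^ ab.2 * g.coeff ab.2 ^ p ^ ab.1))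
  set box := range (n + 1) ×ˢ range (n + 1)
  set low := box.filter fun ab => ab.1 + ab.2 ≤ n
  have hij : (i, j) ∈ low := by simp only [low, box, mem_filter, mem_product, mem_range]; omega
  refine ⟨∑ ab ∈ low.erase (i, j), u ab, Ideal.sum_mem _ fun ab hab => ?_, ?_⟩
  · obtain ⟨hne, hab⟩ := mem_erase.1 hab
    exact iterate_verschiebung_teichmuller_mem_span (hτ _ _ (mem_filter.1 hab).2 hne)
  have hhigh : truncate (n + 1) (∑ ab ∈ box.filter fun ab => ¬ab.1 + ab.2 ≤ n, u ab) = 0 := by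
    rw [map_sum]
    exact sum_eq_zero fun ab hab =>
      truncate_iterate_verschiebung_of_le (by have := (mem_filter.1 hab).2; omega) _
  have hbox : truncate (n + 1) (f * g) = truncate (n + 1) (∑ ab ∈ box, u ab) := by
    rw [map_mul, ← truncate_sum_iterate_verschiebung_teichmuller_coeff f,
      ← truncate_sum_iterate_verschiebung_teichmuller_coeff g, ← map_mul, sum_mul_sum,
      ← sum_product']
    exact congrArg _ (sum_congr rfl fun ab _ => iterate_verschiebung_teichmuller_mul _ _ _ _)
  have htrunc : truncate (n + 1) (f * g) = truncate (n + 1) (∑ ab ∈ low, u ab) := by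
    rw [hbox, ← sum_filter_add_sum_filter_not box fun ab => ab.1 + ab.2 ≤ n, map_add, hhigh,
      add_zero]
  rw [coeff_eq_of_truncate_eq htrunc, ← add_sum_erase low u hij,
    coeff_iterate_verschiebung_teichmuller_add]

end CharP

section coeffAbs

variable (v : Valuation R ℝ≥0)

/-- Over a perfect ring `x = ∑ [xₙ ^ p⁻ⁿ] pⁿ`, so this is `v(yₙ)` for the expansion `x = ∑ [yₙ] pⁿ`
of the paper, and `lim N(x) = -log (⨆ n, coeffAbs v x n)`. -/
noncomputable def coeffAbs (x : 𝕎 R) (n : ℕ) : ℝ≥0 :=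
  v (x.coeff n) ^ ((p ^ n : ℕ) : ℝ)⁻¹

theorem coeffAbs_pow (x : 𝕎 R) (n : ℕ) : coeffAbs v x n ^ p ^ n = v (x.coeff n) :=
  NNReal.rpow_inv_natCast_pow _ (pow_ne_zero n hp.out.ne_zero)

theorem coeffAbs_le_iff {x : 𝕎 R} {n : ℕ} {r : ℝ≥0} :
    coeffAbs v x n ≤ r ↔ v (x.coeff n) ≤ r ^ p ^ n := by
  rw [← coeffAbs_pow, pow_le_pow_iff_left₀ zero_le zero_le (pow_ne_zero n hp.out.ne_zero)]

theorem coeffAbs_lt_iff {x : 𝕎 R} {n : ℕ} {r : ℝ≥0} :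
    coeffAbs v x n < r ↔ v (x.coeff n) < r ^ p ^ n := by
  rw [← coeffAbs_pow, pow_lt_pow_iff_left₀ zero_le zero_le (pow_ne_zero n hp.out.ne_zero)]

theorem coeffAbs_le_one (hv : ∀ x, v x ≤ 1) (x : 𝕎 R) (n : ℕ) : coeffAbs v x n ≤ 1 :=
  (coeffAbs_le_iff v).2 (by simpa using hv _)

theorem map_coeff_pow_mul_coeff_pow (x y : 𝕎 R) (a b : ℕ) :
    v (x.coeff a ^ p ^ b * y.coeff b ^ p ^ a) =
      (coeffAbs v x a * coeffAbs v y b) ^ p ^ (a + b) := by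
  rw [map_mul, map_pow, map_pow, ← coeffAbs_pow v x a, ← coeffAbs_pow v y b]
  ring

variable [CharP R p]

theorem coeffAbs_le_of_mem_span (hv : ∀ x, v x ≤ 1) {a : R} {x : 𝕎 R}
    (hx : x ∈ Ideal.span {teichmuller p a}) (n : ℕ) : coeffAbs v x n ≤ v a :=
  (coeffAbs_le_iff v).2 <| by
    simpa using v.map_le_of_dvd hv ((mem_span_teichmuller_iff a x).1 hx n)

theorem mem_span_of_coeffAbs_lt [PreValuationRing R] (hv : ∀ x, v x ≤ 1) {a : R} {x : 𝕎 R}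
    (h : ∀ n, coeffAbs v x n < v a) : x ∈ Ideal.span {teichmuller p a} :=
  (mem_span_teichmuller_iff a x).2 fun n =>
    v.dvd_of_map_lt hv (by simpa using (coeffAbs_lt_iff v).1 (h n))

variable [PreValuationRing R]

/-- The other terms of weight `≤ i + j` lie in `([τ])` for some `τ` with `v τ` strictly between
their largest absolute value and that of the `(i, j)` term, so they cannot cancel it. -/
theorem coeffAbs_mul_of_forall_lt (hv : ∀ x, v x ≤ 1) (hv1 : ∀ t < 1, ∃ x, t < v x ∧ v x < 1)
    {f g : 𝕎 R} {i j : ℕ}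
    (hpos : 0 < coeffAbs v f i * coeffAbs v g j)
    (hlt : ∀ a b, a + b ≤ i + j → (a, b) ≠ (i, j) →
      coeffAbs v f a * coeffAbs v g b < coeffAbs v f i * coeffAbs v g j) :
    coeffAbs v (f * g) (i + j) = coeffAbs v f i * coeffAbs v g j := by
  set μ := coeffAbs v f i * coeffAbs v g j
  set n := i + j
  have hpn : p ^ n ≠ 0 := pow_ne_zero n hp.out.ne_zero
  set others := (range (n + 1) ×ˢ range (n + 1)).filter
    fun ab : ℕ × ℕ => ab.1 + ab.2 ≤ n ∧ ab ≠ (i, j)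
  set β := others.sup fun ab => coeffAbs v f ab.1 * coeffAbs v g ab.2
  have hβ : β < μ := (Finset.sup_lt_iff hpos).2 fun ab hab => hlt _ _ (mem_filter.1 hab).2.1
    (mem_filter.1 hab).2.2
  obtain ⟨τ, hβτ, hτμ⟩ := v.exists_lt_map_lt hv1 hβ
    (mul_le_one' (coeffAbs_le_one v hv f i) (coeffAbs_le_one v hv g j))
  have hτ : ∀ a b, a + b ≤ n → (a, b) ≠ (i, j) →
      τ ^ p ^ (a + b) ∣ f.coeff a ^ p ^ b * g.coeff b ^ p ^ a := by
    intro a b hab hne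
    have hmem : (a, b) ∈ others := by
      simp only [others, mem_filter, mem_product, mem_range]
      exact ⟨⟨by omega, by omega⟩, hab, hne⟩
    have hle : coeffAbs v f a * coeffAbs v g b ≤ β :=
      le_sup (f := fun ab : ℕ × ℕ => coeffAbs v f ab.1 * coeffAbs v g ab.2) hmem
    refine v.dvd_of_map_lt hv ?_
    rw [map_coeff_pow_mul_coeff_pow, map_pow]
    exact pow_lt_pow_left₀ (hle.trans_lt hβτ) zero_le (pow_ne_zero _ hp.out.ne_zero)
  obtain ⟨Q, hQ, hfg⟩ := exists_coeff_mul_eq_add hτ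
  have hQn : v (Q.coeff n) < v (f.coeff i ^ p ^ j * g.coeff j ^ p ^ i) := by
    rw [map_coeff_pow_mul_coeff_pow]
    calc v (Q.coeff n) ≤ v τ ^ p ^ n := (coeffAbs_le_iff v).1 (coeffAbs_le_of_mem_span v hv hQ n)
      _ < μ ^ p ^ n := pow_lt_pow_left₀ hτμ zero_le hpn
  rw [← pow_left_inj₀ zero_le zero_le hpn, coeffAbs_pow, hfg, v.map_add_eq_of_lt_left hQn,
    map_coeff_pow_mul_coeff_pow]

/-- Supermultiplicativity of the Gauss norm `⨆ n, coeffAbs v x n * ρ ^ n`, read off at the least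
indices where it is attained for `f` and `g`. -/
theorem exists_coeffAbs_mul_mul_pow_le (hv : ∀ x, v x ≤ 1)
    (hv1 : ∀ t < 1, ∃ x, t < v x ∧ v x < 1) (f g : 𝕎 R) {ρ : ℝ≥0} (hρ0 : 0 < ρ) (hρ1 : ρ < 1)
    (a b : ℕ) : ∃ n, coeffAbs v f a * coeffAbs v g b * ρ ^ (a + b) ≤
      coeffAbs v (f * g) n * ρ ^ n := by
  obtain ⟨i, hi, hi'⟩ := NNReal.exists_least_forall_mul_pow_le (coeffAbs_le_one v hv f) hρ1
  obtain ⟨j, hj, hj'⟩ := NNReal.exists_least_forall_mul_pow_le (coeffAbs_le_one v hv g) hρ1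
  have hle : coeffAbs v f a * coeffAbs v g b * ρ ^ (a + b) ≤
      coeffAbs v f i * coeffAbs v g j * ρ ^ (i + j) :=
    calc _ = (coeffAbs v f a * ρ ^ a) * (coeffAbs v g b * ρ ^ b) := by ring
      _ ≤ (coeffAbs v f i * ρ ^ i) * (coeffAbs v g j * ρ ^ j) := mul_le_mul' (hi a) (hj b)
      _ = _ := by ring
  rcases (zero_le : 0 ≤ coeffAbs v f i * coeffAbs v g j).eq_or_lt with h0 | hpos
  · rw [← h0, zero_mul] at hle
    exact ⟨0, hle.trans zero_le⟩
  · refine ⟨i + j, ?_⟩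
    rwa [coeffAbs_mul_of_forall_lt v hv hv1 hpos fun a b hab hne =>
      NNReal.mul_lt_mul_of_forall_mul_pow_le hρ0 hρ1 hi hi' hj hj' hpos hab hne]

theorem coeffAbs_mul_coeffAbs_le (hv : ∀ x, v x ≤ 1) (hv1 : ∀ t < 1, ∃ x, t < v x ∧ v x < 1)
    {f g : 𝕎 R} {r : ℝ≥0} (h : ∀ n, coeffAbs v (f * g) n ≤ r)
    (a b : ℕ) : coeffAbs v f a * coeffAbs v g b ≤ r :=
  NNReal.le_of_forall_mul_pow_le (a + b) fun ρ hρ0 hρ1 => by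
    obtain ⟨n, hn⟩ := exists_coeffAbs_mul_mul_pow_le v hv hv1 f g hρ0 hρ1 a b
    calc _ ≤ coeffAbs v (f * g) n * ρ ^ n := hn
      _ ≤ r * 1 := mul_le_mul' (h n) (pow_le_one₀ zero_le hρ1.le)
      _ = r := mul_one r

end coeffAbs

theorem isPrime_iSup_span_teichmuller [CharP R p] [PreValuationRing R] (v : Valuation R ℝ≥0)
    (hv : ∀ x, v x ≤ 1) {π : ℕ → R} (hπ : ∀ k, π (k + 1) ^ p = π k) (h0 : 0 < v (π 0))
    (h1 : v (π 0) < 1) : (⨆ k, Ideal.span {teichmuller p (π k)}).IsPrime := by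
  have hlt1 : ∀ k, v (π k) < 1 := fun k => (hv _).lt_of_ne fun h =>
    h1.ne (by rw [← v.map_pow_pow_eq_of_forall_pow_eq hπ k, h, one_pow])
  have hv1 : ∀ t < 1, ∃ x, t < v x ∧ v x < 1 := fun t ht =>
    let ⟨k, hk⟩ := v.exists_lt_map_of_forall_pow_eq hp.out.one_lt hπ h0 ht
    ⟨π k, hk, hlt1 k⟩
  have hmem : ∀ x, x ∈ (⨆ k, Ideal.span {teichmuller p (π k)}) ↔
      ∃ k, x ∈ Ideal.span {teichmuller p (π k)} :=
    fun x => Submodule.mem_iSup_of_directed _ (span_teichmuller_mono hπ).directed_le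
  refine ⟨fun htop => ?_, fun {f g} hfg => ?_⟩
  · obtain ⟨k, hk⟩ := (hmem 1).1 (htop ▸ Submodule.mem_top)
    have h1k := (coeffAbs_le_iff v).1 (coeffAbs_le_of_mem_span v hv hk 0)
    rw [one_coeff_zero, map_one, pow_zero, pow_one] at h1k
    exact (hlt1 k).not_ge h1k
  · by_contra! hfg'
    obtain ⟨K, hK⟩ := (hmem _).1 hfg
    obtain ⟨k, hk⟩ := v.exists_lt_map_of_forall_pow_eq hp.out.one_lt hπ h0 (hlt1 K)
    have hlarge : ∀ x ∉ (⨆ k, Ideal.span {teichmuller p (π k)}),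
        ∃ a, v (π (k + 1)) ≤ coeffAbs v x a := fun x hx => by
      by_contra! h
      exact hx ((hmem x).2 ⟨k + 1, mem_span_of_coeffAbs_lt v hv h⟩)
    obtain ⟨a, ha⟩ := hlarge f hfg'.1
    obtain ⟨b, hb⟩ := hlarge g hfg'.2
    refine hk.not_ge ?_
    calc v (π k) = v (π (k + 1)) ^ p := by rw [← map_pow, hπ]
      _ ≤ v (π (k + 1)) ^ 2 := pow_le_pow_right_of_le_one' (hv _) hp.out.two_le
      _ = v (π (k + 1)) * v (π (k + 1)) := sq _
      _ ≤ coeffAbs v f a * coeffAbs v g b := mul_le_mul' ha hb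
      _ ≤ v (π K) := coeffAbs_mul_coeffAbs_le v hv hv1 (coeffAbs_le_of_mem_span v hv hK) a b

end WittVector

open WittVector in
theorem stmt6_general (p : ℕ) [Fact p.Prime] (R : Type*) [CommRing R] [IsDomain R]
    [CharP R p] [PerfectRing R p] [ValuationRing R]
    [Valued R NNReal]
    (hint : ∀ x : R, Valued.v x ≤ 1)
    (ϖ : R) (hϖ0 : 0 < Valued.v ϖ) (hϖ1 : Valued.v ϖ < 1) :
    ∃ P : Ideal (WittVector p R), P.IsPrime ∧
      (P : Set (WittVector p R)) =
        ⋃ k : ℕ, (Ideal.span {WittVector.teichmuller p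
          ((fun x => (frobeniusEquiv R p).symm x)^[k] ϖ)} : Set (WittVector p R)) := by
  set π : ℕ → R := fun k => (fun x => (frobeniusEquiv R p).symm x)^[k] ϖ
  have hπ : ∀ k, π (k + 1) ^ p = π k := fun k => by
    simp only [π, Function.iterate_succ_apply', frobeniusEquiv_symm_pow_p]
  exact ⟨_, isPrime_iSup_span_teichmuller Valued.v hint hπ hϖ0 hϖ1,
    Submodule.coe_iSup_of_directed _ (span_teichmuller_mono hπ).directed_le⟩

/-- Let `R` be a perfect valuation ring of characteristic `p`, complete with respect to a
nondiscrete rank-1 valuation, with pseudouniformizer `ϖ`.  In `𝔸 = W(R)`, the union over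
`k` of the principal ideals generated by the Teichmüller lifts of the `p^k`-th roots of `ϖ`
is a prime ideal. -/
theorem stmt6 (p : ℕ) [Fact p.Prime] (R : Type*) [CommRing R] [IsDomain R]
    [CharP R p] [PerfectRing R p] [ValuationRing R]
    [Valued R NNReal] [CompleteSpace R]
    (hint : ∀ x : R, Valued.v x ≤ 1)
    (hnondisc : ∀ γ : NNReal, 0 < γ → γ < 1 → ∃ x : R, γ < Valued.v x ∧ Valued.v x < 1)
    (ϖ : R) (hϖ0 : 0 < Valued.v ϖ) (hϖ1 : Valued.v ϖ < 1) :
    ∃ P : Ideal (WittVector p R), P.IsPrime ∧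
      (P : Set (WittVector p R)) =
        ⋃ k : ℕ, (Ideal.span {WittVector.teichmuller p
          ((fun x => (frobeniusEquiv R p).symm x)^[k] ϖ)} : Set (WittVector p R)) :=
  stmt6_general p R hint ϖ hϖ0 hϖ1
end

section
/- Let R be a valuation ring with rank-1 valuation v, and let x_0,…,x_n, y_0,…,y_n ∈ R. Suppose v(y_n) < v(x_m) for all 0 ≤ m ≤ n and v(y_n) < v(y_m) for all 0 ≤ m < n. Then for any nonnegative integers i_0, j_0, …, i_{n−1}, j_{n−1} with Σ_{k=0}^{n−1} p^k(i_k + j_k) = p^n, one has v(∏_{k=0}^{n−1} y_k^{p^k i_k} x_k^{p^k j_k}) > p^n · v(y_n). Consequently v(S_n(y_0,…,y_n^{p^n}; x_0,…,x_n^{p^n})) = p^n · v(y_n), where S_n is the n-th Witt addition polynomial. -/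
/-!
Give the variable `X_{b,k}` of the Witt addition polynomial `Sₙ` the weight `pᵏ`. The recursion
defining `Sₙ` shows that it is weighted homogeneous of degree `pⁿ`, so a monomial containing
`X_{0,n}` is `X_{0,n}` itself, and no monomial involves an index `> n`. The coefficient of
`X_{0,n}` is `1`, as one sees by computing `x + 0` for the Witt vector `x` with a single
nonzero coordinate. After substituting `X_{0,k} ↦ y_k^{pᵏ}` and `X_{1,k} ↦ x_k^{pᵏ}`, every
other monomial is a product of `pⁿ` factors from `{y_k : k < n} ∪ {x_k : k ≤ n}`, each of
valuation `> v(yₙ)`, so the term `yₙ^{pⁿ}` strictly dominates.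
-/

open MvPolynomial Finset

theorem Finsupp.eq_single_one_of_weight_eq {σ : Type*} {w : σ → ℕ} (hw : ∀ s, w s ≠ 0)
    {f : σ →₀ ℕ} {i : σ} (hi : f i ≠ 0) (h : weight w f = w i) : f = single i 1 := by
  have : NonTorsionWeight ℕ w := nonTorsionWeight_of ℕ w hw
  have h0 : weight w (f - single i 1) = 0 := by
    have := weight_sub_single_add (w := w) hi
    omega
  rw [weight_eq_zero_iff_eq_zero] at h0
  rw [← sub_add_single_one_cancel hi, h0, zero_add]

namespace MvPolynomial

namespace IsWeightedHomogeneous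

variable {σ τ R M : Type*} [CommSemiring R] [AddCommMonoid M]

theorem bind₁ {w : σ → M} {w' : τ → M} {φ : MvPolynomial σ R} {m : M}
    (hφ : φ.IsWeightedHomogeneous w m) {f : σ → MvPolynomial τ R}
    (hf : ∀ i, (f i).IsWeightedHomogeneous w' (w i)) :
    (bind₁ f φ).IsWeightedHomogeneous w' m := by
  rw [φ.as_sum, map_sum]
  refine IsWeightedHomogeneous.sum _ _ _ fun d hd => ?_
  rw [bind₁_monomial, ← hφ (mem_support_iff.mp hd), Finsupp.weight_apply, Finsupp.sum]
  exact (IsWeightedHomogeneous.prod _ _ _ fun i _ => (hf i).pow (d i)).C_mul _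

theorem rename {w' : τ → M} {φ : MvPolynomial σ R} {m : M} {g : σ → τ}
    (hφ : φ.IsWeightedHomogeneous (w' ∘ g) m) :
    (rename g φ).IsWeightedHomogeneous w' m := by
  rw [rename_eq_aeval]
  exact hφ.bind₁ fun i => isWeightedHomogeneous_X R w' (g i)

end IsWeightedHomogeneous

theorem IsHomogeneous.isWeightedHomogeneous_const {σ R : Type*} [CommSemiring R]
    {φ : MvPolynomial σ R} {d : ℕ} (hφ : φ.IsHomogeneous d) (c : ℕ) :
    φ.IsWeightedHomogeneous (fun _ => c) (d * c) := by
  intro e he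
  rw [← hφ he]
  simp [Finsupp.weight_apply, Finsupp.sum, Finset.sum_mul]

theorem IsWeightedHomogeneous.eval_pi_single_one {σ R : Type*} [CommSemiring R]
    [DecidableEq σ] {w : σ → ℕ} (hw : ∀ s, w s ≠ 0) {φ : MvPolynomial σ R} {i : σ}
    (hφ : φ.IsWeightedHomogeneous w (w i)) :
    eval (Pi.single i 1) φ = coeff (Finsupp.single i 1) φ := by
  rw [eval_eq, Finset.sum_eq_single (Finsupp.single i 1)]
  · simp
  · intro d hd hne
    obtain ⟨j, hj, hji⟩ : ∃ j ∈ d.support, j ≠ i := by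
      by_contra! h
      have hd0 : d ≠ 0 := by
        rintro rfl
        exact hw i (by simpa using (hφ (mem_support_iff.mp hd)).symm)
      obtain ⟨j, hj⟩ := Finsupp.support_nonempty_iff.mpr hd0
      exact hne (Finsupp.eq_single_one_of_weight_eq hw (h j hj ▸ Finsupp.mem_support_iff.mp hj)
        (hφ (mem_support_iff.mp hd)))
    rw [Finset.prod_eq_zero hj (by simp [hji, Finsupp.mem_support_iff.mp hj]), mul_zero]
  · intro h
    rw [notMem_support_iff.mp h, zero_mul]

end MvPolynomial

namespace WittVector

variable (p : ℕ)

theorem isWeightedHomogeneous_wittPolynomial (R : Type*) [CommRing R] (n : ℕ) :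
    (wittPolynomial p R n).IsWeightedHomogeneous (p ^ ·) (p ^ n) := by
  refine IsWeightedHomogeneous.sum _ _ _ fun i hi => isWeightedHomogeneous_monomial _ _ _ ?_
  rw [Finsupp.weight_single, smul_eq_mul, ← pow_add,
    Nat.sub_add_cancel (Nat.lt_succ_iff.mp (mem_range.mp hi))]

variable [Fact p.Prime]

theorem isWeightedHomogeneous_wittStructureRat {idx : Type*} {Φ : MvPolynomial idx ℚ} {d : ℕ}
    (hΦ : Φ.IsHomogeneous d) (n : ℕ) :
    (wittStructureRat p Φ n).IsWeightedHomogeneous (fun bk : idx × ℕ => p ^ bk.2)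
      (d * p ^ n) := by
  induction n using Nat.strong_induction_on with
  | _ n ih =>
    rw [wittStructureRat_rec]
    refine IsWeightedHomogeneous.C_mul (IsWeightedHomogeneous.sub ?_ ?_) _
    · exact (hΦ.isWeightedHomogeneous_const (p ^ n)).bind₁ fun b =>
        (isWeightedHomogeneous_wittPolynomial p ℚ n).rename (g := (b, ·))
    · refine IsWeightedHomogeneous.sum _ _ _ fun i hi => ?_
      have := ((ih i (mem_range.mp hi)).pow (p ^ (n - i))).C_mul ((p : ℚ) ^ i)
      rwa [smul_eq_mul, mul_left_comm, ← pow_add,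
        Nat.sub_add_cancel (mem_range.mp hi).le] at this

theorem isWeightedHomogeneous_wittAdd (n : ℕ) :
    (wittAdd p n).IsWeightedHomogeneous (fun bk : Fin 2 × ℕ => p ^ bk.2) (p ^ n) := by
  intro d hd
  have hrat := isWeightedHomogeneous_wittStructureRat p
    ((isHomogeneous_X ℚ (0 : Fin 2)).add (isHomogeneous_X ℚ 1)) n
  rw [one_mul] at hrat
  refine hrat ?_
  rw [show (X 0 + X 1 : MvPolynomial (Fin 2) ℚ) =
      MvPolynomial.map (Int.castRingHom ℚ) (X 0 + X 1) by simp,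
    ← map_wittStructureInt, coeff_map]
  exact Int.cast_ne_zero.mpr hd

theorem coeff_wittAdd_single_zero (n : ℕ) :
    MvPolynomial.coeff (Finsupp.single (0, n) 1) (wittAdd p n) = 1 := by
  classical
  rw [← (isWeightedHomogeneous_wittAdd p n).eval_pi_single_one
    (fun _ => (pow_pos (Fact.out : p.Prime).pos _).ne')]
  have h := add_coeff (mk p (Pi.single n 1) : WittVector p ℤ) 0 n
  have hpt : Function.uncurry ![Pi.single n 1, (0 : WittVector p ℤ).coeff] =
      Pi.single (0, n) 1 := by
    funext ⟨b, k⟩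
    fin_cases b <;> simp [Pi.single_apply]
  rw [add_zero, coeff_mk, Pi.single_eq_same, peval, hpt] at h
  exact h.symm

theorem snd_le_and_ne_of_mem_support_wittAdd {n : ℕ} {d : Fin 2 × ℕ →₀ ℕ}
    (hd : d ∈ (wittAdd p n).support) (hd₀ : d ≠ Finsupp.single (0, n) 1) {i : Fin 2 × ℕ}
    (hi : i ∈ d.support) : i.2 ≤ n ∧ i ≠ (0, n) := by
  have hw := isWeightedHomogeneous_wittAdd p n (mem_support_iff.mp hd)
  have hdi := Finsupp.mem_support_iff.mp hi
  refine ⟨?_, ?_⟩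
  · rw [← Nat.pow_le_pow_iff_right (Fact.out : p.Prime).one_lt, ← hw]
    exact Finsupp.le_weight_of_ne_zero' (fun bk : Fin 2 × ℕ => p ^ bk.2) hdi
  · rintro rfl
    exact hd₀ (Finsupp.eq_single_one_of_weight_eq
      (fun _ => (pow_pos (Fact.out : p.Prime).pos _).ne') hdi hw)

end WittVector

protected theorem WithTop.nsmul_ne_top {α : Type*} [AddMonoid α] {a : WithTop α} (ha : a ≠ ⊤)
    (n : ℕ) : n • a ≠ ⊤ := by
  lift a to α using ha
  exact coe_nsmul a n ▸ coe_ne_top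

namespace WithTop

variable {ι α : Type*} [AddCancelCommMonoid α] [LinearOrder α] [IsOrderedAddMonoid α]

protected theorem nsmul_lt_nsmul_right {a b : WithTop α} {n : ℕ} (ha : a ≠ ⊤) (hn : n ≠ 0)
    (h : a < b) : n • a < n • b := by
  obtain ⟨m, rfl⟩ := Nat.exists_eq_succ_of_ne_zero hn
  rw [succ_nsmul, succ_nsmul]
  exact WithTop.add_lt_add_of_le_of_lt (WithTop.nsmul_ne_top ha m)
    (nsmul_le_nsmul_right h.le m) h

protected theorem sum_lt_sum {s : Finset ι} {f g : ι → WithTop α}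
    (hf : ∀ i ∈ s, f i ≠ ⊤) (hle : ∀ i ∈ s, f i ≤ g i) (hlt : ∃ i ∈ s, f i < g i) :
    ∑ i ∈ s, f i < ∑ i ∈ s, g i := by
  classical
  obtain ⟨i, hi, hfg⟩ := hlt
  rw [← add_sum_erase _ _ hi, ← add_sum_erase _ g hi]
  exact WithTop.add_lt_add_of_lt_of_le
    (sum_ne_top.mpr fun j hj => hf j (mem_of_mem_erase hj)) hfg
    (sum_le_sum fun j hj => hle j (mem_of_mem_erase hj))

end WithTop

namespace AddValuation

variable {R Γ₀ : Type*} [CommRing R] [LinearOrderedAddCommMonoidWithTop Γ₀]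
  (v : AddValuation R Γ₀)

theorem map_prod {ι : Type*} (s : Finset ι) (f : ι → R) :
    v (∏ i ∈ s, f i) = ∑ i ∈ s, v (f i) := by
  induction s using Finset.cons_induction with
  | empty => simp
  | cons a s ha ih => rw [prod_cons, sum_cons, v.map_mul, ih]

theorem map_intCast_nonneg (m : ℤ) : 0 ≤ v (m : R) := by
  induction m using Int.induction_on with
  | zero => simp
  | succ i ih => push_cast at ih ⊢; exact v.map_le_add ih v.map_one.ge
  | pred i ih => push_cast at ih ⊢; exact v.map_le_sub ih v.map_one.ge

theorem map_aeval_eq_of_lt {σ : Type*} {φ : MvPolynomial σ ℤ} {f : σ → R}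
    {d₀ : σ →₀ ℕ} (h₀ : coeff d₀ φ = 1)
    (hne : v (aeval f (monomial d₀ (1 : ℤ))) ≠ ⊤)
    (hlt : ∀ d ∈ φ.support, d ≠ d₀ →
      v (aeval f (monomial d₀ (1 : ℤ))) < v (aeval f (monomial d (1 : ℤ)))) :
    v (aeval f φ) = v (aeval f (monomial d₀ (1 : ℤ))) := by
  classical
  have hd₀ : d₀ ∈ φ.support := by simp [h₀]
  conv_lhs => rw [φ.as_sum, ← add_sum_erase _ _ hd₀]
  rw [_root_.map_add, map_sum, h₀]
  refine v.map_add_eq_of_lt_left <| v.map_lt_sum hne fun d hd =>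
    (hlt d (mem_of_mem_erase hd) (ne_of_mem_erase hd)).trans_le ?_
  rw [← mul_one (coeff d φ), ← C_mul_monomial, _root_.map_mul, aeval_C, v.map_mul,
    eq_intCast (algebraMap ℤ R)]
  exact le_add_of_nonneg_left (v.map_intCast_nonneg _)

theorem nsmul_lt_map_prod_pow {α : Type*} [AddCancelCommMonoid α] [LinearOrder α]
    [IsOrderedAddMonoid α] (v : AddValuation R (WithTop α)) {ι : Type*} {s : Finset ι}
    {z : ι → R} {e : ι → ℕ} {t : R} (hz : ∀ k ∈ s, v t < v (z k))
    (he : ∑ k ∈ s, e k ≠ 0) : (∑ k ∈ s, e k) • v t < v (∏ k ∈ s, z k ^ e k) := by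
  obtain ⟨k, hk, hek⟩ := exists_ne_zero_of_sum_ne_zero he
  have ht := (hz k hk).ne_top
  rw [v.map_prod, ← sum_nsmul_assoc]
  simp only [v.map_pow]
  exact WithTop.sum_lt_sum (fun k _ => WithTop.nsmul_ne_top ht _)
    (fun k hk => nsmul_le_nsmul_right (hz k hk).le _)
    ⟨k, hk, WithTop.nsmul_lt_nsmul_right ht hek (hz k hk)⟩

end AddValuation

section

variable {R α : Type*} [CommRing R] [AddCancelCommMonoid α] [LinearOrder α]
  [IsOrderedAddMonoid α] (v : AddValuation R (WithTop α)) {n : ℕ} {x y : ℕ → R}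

theorem nsmul_lt_map_prod_pow_mul_pow {p : ℕ} (hp : p ≠ 0) (hx : ∀ m < n, v (y n) < v (x m))
    (hy : ∀ m < n, v (y n) < v (y m)) {i j : ℕ → ℕ}
    (hsum : ∑ k ∈ range n, p ^ k * (i k + j k) = p ^ n) :
    (p ^ n : ℕ) • v (y n) <
      v (∏ k ∈ range n, y k ^ (p ^ k * i k) * x k ^ (p ^ k * j k)) := by
  set e : Fin 2 × ℕ → ℕ := fun bk => p ^ bk.2 * ![i, j] bk.1 bk.2
  have hprod : ∏ k ∈ range n, y k ^ (p ^ k * i k) * x k ^ (p ^ k * j k) =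
      ∏ bk ∈ univ ×ˢ range n, Function.uncurry ![y, x] bk ^ e bk := by
    simp [prod_product_right, Fin.prod_univ_two, e]
  have hexp : ∑ bk ∈ univ ×ˢ range n, e bk = p ^ n := by
    simpa [sum_product_right, Fin.sum_univ_two, e, mul_add] using hsum
  rw [hprod, ← hexp]
  refine v.nsmul_lt_map_prod_pow (fun ⟨b, k⟩ hbk => ?_) (hexp ▸ pow_ne_zero n hp)
  have hk := mem_range.mp (mem_product.mp hbk).2
  fin_cases b
  exacts [hy k hk, hx k hk]

theorem map_aeval_wittAdd (p : ℕ) [Fact p.Prime] (hx : ∀ m ≤ n, v (y n) < v (x m))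
    (hy : ∀ m < n, v (y n) < v (y m)) :
    v (aeval (fun bk => Function.uncurry ![y, x] bk ^ p ^ bk.2) (WittVector.wittAdd p n)) =
      (p ^ n : ℕ) • v (y n) := by
  set f : Fin 2 × ℕ → R := fun bk => Function.uncurry ![y, x] bk ^ p ^ bk.2
  have hmono (d : Fin 2 × ℕ →₀ ℕ) : aeval f (monomial d (1 : ℤ)) =
      ∏ bk ∈ d.support, Function.uncurry ![y, x] bk ^ (p ^ bk.2 * d bk) := by
    simp [f, aeval_monomial, Finsupp.prod, pow_mul]
  have hlead : v (aeval f (monomial (Finsupp.single (0, n) 1) (1 : ℤ))) =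
      (p ^ n : ℕ) • v (y n) := by
    simp [hmono, v.map_pow]
  rw [v.map_aeval_eq_of_lt (WittVector.coeff_wittAdd_single_zero p n), hlead]
  · rw [hlead]
    exact WithTop.nsmul_ne_top (hx 0 n.zero_le).ne_top _
  · intro d hd hne
    have hweight : ∑ bk ∈ d.support, p ^ bk.2 * d bk = p ^ n := by
      simpa [Finsupp.weight_apply, Finsupp.sum, mul_comm] using
        WittVector.isWeightedHomogeneous_wittAdd p n (mem_support_iff.mp hd)
    rw [hlead, hmono, ← hweight]
    refine v.nsmul_lt_map_prod_pow (fun ⟨b, k⟩ hbk => ?_)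
      (hweight ▸ pow_ne_zero n (Fact.out : p.Prime).ne_zero)
    obtain ⟨hk, hbk⟩ := WittVector.snd_le_and_ne_of_mem_support_wittAdd p hd hne hbk
    fin_cases b
    exacts [hy k (lt_of_le_of_ne hk fun h => hbk (h ▸ rfl)), hx k hk]

end

theorem stmt8_general (p : ℕ) [Fact p.Prime] (R : Type*) [CommRing R]
    (v : AddValuation R (WithTop ℝ)) (n : ℕ) (x y : ℕ → R)
    (hx : ∀ m ≤ n, v (y n) < v (x m)) (hy : ∀ m < n, v (y n) < v (y m)) :
    (∀ i j : ℕ → ℕ, (∑ k ∈ Finset.range n, p ^ k * (i k + j k) = p ^ n) →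
      (p ^ n : ℕ) • v (y n) <
        v (∏ k ∈ Finset.range n, y k ^ (p ^ k * i k) * x k ^ (p ^ k * j k))) ∧
    v (MvPolynomial.aeval
        (fun bi : Fin 2 × ℕ => if bi.1 = 0 then y bi.2 ^ p ^ bi.2 else x bi.2 ^ p ^ bi.2)
        (WittVector.wittAdd p n)) = (p ^ n : ℕ) • v (y n) := by
  refine ⟨fun i j => nsmul_lt_map_prod_pow_mul_pow v (Fact.out : p.Prime).ne_zero
    (fun m hm => hx m hm.le) hy, ?_⟩
  convert map_aeval_wittAdd v p hx hy using 4
  funext ⟨b, k⟩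
  fin_cases b <;> rfl

/-- In a valuation ring with rank-1 (additive) valuation `v`, if `v(yₙ) < v(xₘ)` for all
`m ≤ n` and `v(yₙ) < v(yₘ)` for all `m < n`, then every monomial
`∏_{k<n} y_k^{p^k i_k} x_k^{p^k j_k}` with `Σ p^k(i_k+j_k) = pⁿ` has valuation
`> pⁿ·v(yₙ)`, and consequently `v(Sₙ(y₀,…,yₙ^{pⁿ}; x₀,…,xₙ^{pⁿ})) = pⁿ·v(yₙ)`. -/
theorem stmt8 (p : ℕ) [Fact p.Prime] (R : Type*) [CommRing R] [IsDomain R]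
    [ValuationRing R] (v : AddValuation R (WithTop ℝ)) (n : ℕ) (x y : ℕ → R)
    (hx : ∀ m ≤ n, v (y n) < v (x m)) (hy : ∀ m < n, v (y n) < v (y m)) :
    (∀ i j : ℕ → ℕ, (∑ k ∈ Finset.range n, p ^ k * (i k + j k) = p ^ n) →
      (p ^ n : ℕ) • v (y n) <
        v (∏ k ∈ Finset.range n, y k ^ (p ^ k * i k) * x k ^ (p ^ k * j k))) ∧
    v (MvPolynomial.aeval
        (fun bi : Fin 2 × ℕ => if bi.1 = 0 then y bi.2 ^ p ^ bi.2 else x bi.2 ^ p ^ bi.2)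
        (WittVector.wittAdd p n)) = (p ^ n : ℕ) • v (y n) :=
  stmt8_general p R v n x y hx hy
end

section
/- Let p be prime, n ≥ 1, and for i ≥ 0 set w_n(i) := p^{−i^{2^{n−1}}} ∈ ℝ (the valuation of a_{n,i} = ϖ^{1/p^{i^{2^{n−1}}}}). Let N_n : ℤ_{≥0} → ℝ be the function N_n(ℓ) = w_n(ℓ). For any m ≥ 1 and any integer ℓ = km + r with k > 2m and 0 ≤ r < m, one has m · w_n(k²) < w_n(ℓ), i.e., m·p^{−k^{2^n}} < p^{−(km+r)^{2^{n−1}}}. -/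
/-! Write `N = 2^{n-1}`, `y = km + r` and `x = k²`, so that the claim reads
`m · p^{-x^N} < p^{-y^N}`. Since `k > 2m`, `y + m < x`, and superadditivity of `t ↦ t^N` on `ℕ`
gives the gap `y^N + m ≤ x^N`; the factor `p^{x^N - y^N} ≥ 2^m > m` then absorbs `m`. -/

lemma Nat.pow_add_le_pow_of_add_le {a b c N : ℕ} (h : a + c ≤ b) (hN : N ≠ 0) :
    a ^ N + c ≤ b ^ N :=
  calc a ^ N + c ≤ a ^ N + c ^ N := Nat.add_le_add_left (Nat.le_self_pow hN c) _
    _ ≤ (a + c) ^ N := pow_add_pow_le (Nat.zero_le a) (Nat.zero_le c) hN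
    _ ≤ b ^ N := Nat.pow_le_pow_left h N

lemma Real.natCast_mul_zpow_neg_lt_zpow_neg {p : ℝ} (hp : 2 ≤ p) {m a b : ℕ} (h : a + m ≤ b) :
    (m : ℝ) * p ^ (-(b : ℤ)) < p ^ (-(a : ℤ)) := by
  have hp0 : 0 < p := by linarith
  have hm : (m : ℝ) < p ^ (b - a) :=
    calc (m : ℝ) < 2 ^ m := by exact_mod_cast Nat.lt_two_pow_self
      _ ≤ p ^ m := pow_le_pow_left₀ zero_le_two hp m
      _ ≤ p ^ (b - a) := pow_le_pow_right₀ (by linarith) (by omega)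
  have hsplit : p ^ (-(a : ℤ)) = p ^ (b - a) * p ^ (-(b : ℤ)) := by
    rw [← zpow_natCast, ← zpow_add₀ hp0.ne']
    congr 1
    omega
  rw [hsplit]
  exact mul_lt_mul_of_pos_right hm (zpow_pos hp0 _)

theorem stmt11_general (p : ℕ) (hp : p.Prime) (n : ℕ) (hn : 1 ≤ n) (m k r : ℕ)
    (hk : 2 * m < k) (hr : r < m) :
    (m : ℝ) * (p : ℝ) ^ (-((k : ℤ) ^ (2 ^ n))) <
      (p : ℝ) ^ (-(((k * m + r : ℕ) : ℤ) ^ (2 ^ (n - 1)))) := by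
  obtain ⟨N, rfl⟩ : ∃ N, n = N + 1 := ⟨n - 1, by omega⟩
  have hexp : (k : ℤ) ^ 2 ^ (N + 1) = (((k ^ 2) ^ 2 ^ N : ℕ) : ℤ) := by push_cast; ring
  have hlt : k * m + r + m ≤ k ^ 2 := by nlinarith
  have hgap : (k * m + r) ^ 2 ^ N + m ≤ (k ^ 2) ^ 2 ^ N :=
    Nat.pow_add_le_pow_of_add_le hlt (pow_ne_zero N two_ne_zero)
  rw [hexp, Nat.add_sub_cancel, ← Nat.cast_pow]
  exact Real.natCast_mul_zpow_neg_lt_zpow_neg (by exact_mod_cast hp.two_le) hgap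

/-- Numerical core of the comparison of Newton polygons: for `p` prime, `n ≥ 1`,
`m ≥ 1`, `k > 2m`, `0 ≤ r < m`, one has `m · p^{−k^{2^n}} < p^{−(km+r)^{2^{n−1}}}`. -/
theorem stmt11 (p : ℕ) (hp : p.Prime) (n : ℕ) (hn : 1 ≤ n) (m k r : ℕ)
    (hm : 1 ≤ m) (hk : 2 * m < k) (hr : r < m) :
    (m : ℝ) * (p : ℝ) ^ (-((k : ℤ) ^ (2 ^ n))) <
      (p : ℝ) ^ (-(((k * m + r : ℕ) : ℤ) ^ (2 ^ (n - 1)))) :=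
  stmt11_general p hp n hn m k r hk hr
end

section
/- Let A be a commutative ring, S ⊆ A a multiplicatively closed set, p a prime ideal of A disjoint from S, and h ∈ A. Suppose that for every g ∈ S and f ∈ A, g + f·h ∈ S' for some subset S' with S' ⊆ S (in the application S' is multiplicatively closed as well). Then the ideal a := p + h·A is disjoint from S'. If moreover h ∈ S, then a strictly contains p. -/
/-- Inductive step of Arnold's argument: if `p` is a prime ideal disjoint from a
multiplicatively closed set `S`, `S' ⊆ S` is multiplicatively closed, and
`g + f·h ∈ S'` for every `g ∈ S` and `f ∈ A`, then the ideal `p + h·A` is disjoint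
from `S'`; if moreover `h ∈ S`, it strictly contains `p`. -/
theorem stmt14 (A : Type*) [CommRing A] (S S' : Set A)
    (hmul : ∀ a ∈ S, ∀ b ∈ S, a * b ∈ S) (hsub : S' ⊆ S)
    (hmul' : ∀ a ∈ S', ∀ b ∈ S', a * b ∈ S')
    (p : Ideal A) (hp : p.IsPrime) (hdisj : (p : Set A) ∩ S = ∅) (h : A)
    (hstep : ∀ g ∈ S, ∀ f : A, g + f * h ∈ S') :
    ((↑(p ⊔ Ideal.span {h}) : Set A) ∩ S' = ∅) ∧
    (h ∈ S → p < p ⊔ Ideal.span {h}) := by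
  have hdisj' : ∀ x, x ∈ p → x ∈ S → False := by
    intro x hxp hxS
    have : x ∈ (p : Set A) ∩ S := ⟨hxp, hxS⟩
    rw [hdisj] at this
    exact this
  constructor
  · rw [Set.eq_empty_iff_forall_notMem]
    rintro x ⟨hxmem, hxS'⟩
    rw [SetLike.mem_coe, Submodule.mem_sup] at hxmem
    obtain ⟨q, hq, z, hz, rfl⟩ := hxmem
    rw [Ideal.mem_span_singleton] at hz
    obtain ⟨f, rfl⟩ := hz
    have hxS : q + h * f ∈ S := hsub hxS'
    have : (q + h * f) + (-f) * h ∈ S' := hstep _ hxS (-f)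
    have hq' : (q + h * f) + (-f) * h = q := by ring
    rw [hq'] at this
    exact hdisj' q hq (hsub this)
  · intro hhS
    refine lt_of_le_of_ne le_sup_left ?_
    intro heq
    have hh : h ∈ p ⊔ Ideal.span {h} :=
      Submodule.mem_sup_right (Ideal.mem_span_singleton_self h)
    rw [← heq] at hh
    exact hdisj' h hh hhS
end
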